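/- arXiv:0812.3678 — 4 statements merged into one kernel-verified Lean document; each statement's English description precedes it below -/
import Mathlib

section
/- Let v_1, …, v_m be vectors in ℝ^n and c_1, …, c_m real numbers. Suppose there exist ε > 0 and a convex function g : ℝ^n → ℝ such that g(t • v_i) = t * c_i for every i and every t ∈ [0, ε]. Then for all nonnegative real numbers λ_1, …, λ_m with Σ_i λ_i • v_i = 0 one has Σ_i λ_i * c_i ≥ 0. -/
/-!
Jensen's inequality for `g` with the weights `λ i` at the points `ε • v i`, whose weighted sum
is `ε • ∑ λ i • v i = 0`, gives `(∑ λ i) * g 0 ≤ ∑ λ i * g (ε • v i) = ε * ∑ λ i * c i`,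
and `g 0 = 0` because `g` vanishes at the apex of every ray.
-/

open Finset

theorem ConvexOn.sum_mul_map_zero_le {𝕜 E ι : Type*} [Field 𝕜] [LinearOrder 𝕜]
    [IsStrictOrderedRing 𝕜] [AddCommGroup E] [Module 𝕜 E] {g : E → 𝕜}
    (hg : ConvexOn 𝕜 Set.univ g) {s : Finset ι} {w : ι → 𝕜} {p : ι → E}
    (hw : ∀ i ∈ s, 0 ≤ w i) (hp : ∑ i ∈ s, w i • p i = 0) :
    (∑ i ∈ s, w i) * g 0 ≤ ∑ i ∈ s, w i * g (p i) := by
  rcases (sum_nonneg hw).eq_or_lt with hzero | hpos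
  · have hw0 : ∀ i ∈ s, w i = 0 := (sum_eq_zero_iff_of_nonneg hw).1 hzero.symm
    rw [← hzero, zero_mul, sum_eq_zero fun i hi => by rw [hw0 i hi, zero_mul]]
  · have hjensen := hg.map_centerMass_le hw hpos fun i _ => Set.mem_univ (p i)
    simp only [centerMass, hp, smul_zero, Function.comp_apply, smul_eq_mul] at hjensen
    exact (le_inv_mul_iff₀ hpos).1 hjensen

/-- If the positively homogeneous extension of the values `c i` along the
rays spanned by `v i` is locally (near the origin) the restriction of a convex function
`g` on `ℝ^n`, then every nonnegative linear relation among the `v i` is respected by the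
values `c i`. -/
theorem convexity_criterion_forward {n m : ℕ}
    (v : Fin m → (Fin n → ℝ)) (c : Fin m → ℝ)
    (hconv : ∃ ε > (0 : ℝ), ∃ g : (Fin n → ℝ) → ℝ, ConvexOn ℝ Set.univ g ∧
      ∀ i : Fin m, ∀ t ∈ Set.Icc (0 : ℝ) ε, g (t • v i) = t * c i) :
    ∀ lam : Fin m → ℝ, (∀ i, 0 ≤ lam i) → (∑ i, lam i • v i = 0) →
      0 ≤ ∑ i, lam i * c i := by
  obtain ⟨ε, hε, g, hg, hgv⟩ := hconv
  intro lam hlam hsum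
  cases isEmpty_or_nonempty (Fin m) with
  | inl _ => simp
  | inr hm =>
    obtain ⟨i₀⟩ := hm
    have hg0 : g 0 = 0 := by simpa using hgv i₀ 0 ⟨le_rfl, hε.le⟩
    have hcentroid : ∑ i, lam i • ε • v i = 0 := by
      simp only [smul_comm (lam _) ε, ← smul_sum, hsum, smul_zero]
    have hjensen := hg.sum_mul_map_zero_le (fun i _ => hlam i) hcentroid
    simp only [hg0, mul_zero, hgv _ ε ⟨hε.le, le_rfl⟩, mul_left_comm (lam _) ε,
      ← mul_sum] at hjensen
    exact nonneg_of_mul_nonneg_right hjensen hε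
end

section
/- Let v_1, …, v_m be vectors in ℝ^n and c_1, …, c_m real numbers. Suppose there exist ε > 0 and a convex function g : ℝ^n → ℝ such that g(t • v_i) = t * c_i for every i and every t ∈ [0, ε], and suppose there exist strictly positive real numbers ω_1, …, ω_m with Σ_i ω_i • v_i = 0 and Σ_i ω_i * c_i = 0. Then there exists a linear functional L : ℝ^n → ℝ with L(v_i) = c_i for all i. -/
/-!
A convex function `g` on `ℝ^n` has a subgradient `L` at the origin, obtained by separating
`(0, g 0)` from the open strict epigraph of `g`. Along each ray `g (ε • v i) = ε * c i`, so
`L (v i) ≤ c i`. The balancing conditions give `∑ ω i * (c i - L (v i)) = 0`, a sum of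
nonnegative terms with positive weights, hence `L (v i) = c i` for every `i`.
-/

open Set

theorem ConvexOn.exists_subgradient {E : Type*} [TopologicalSpace E] [AddCommGroup E]
    [IsTopologicalAddGroup E] [Module ℝ E] [ContinuousSMul ℝ E] {f : E → ℝ}
    (hf : ConvexOn ℝ univ f) (hcont : Continuous f) (x₀ : E) :
    ∃ L : StrongDual ℝ E, ∀ x, f x₀ + L (x - x₀) ≤ f x := by
  have hopen : IsOpen {p : E × ℝ | p.1 ∈ univ ∧ f p.1 < p.2} := by
    simp only [mem_univ, true_and]
    exact isOpen_lt (by fun_prop) continuous_snd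
  obtain ⟨F, hF⟩ := geometric_hahn_banach_open_point hf.convex_strict_epigraph hopen
    (x := (x₀, f x₀)) (by simp)
  set φ : StrongDual ℝ E := F.comp (.inl ℝ E ℝ)
  set a := F (0, 1)
  have hF_apply : ∀ x t, F (x, t) = φ x + t * a := fun x t => by
    have : (x, t) = (x, 0) + t • ((0 : E), (1 : ℝ)) := by simp
    rw [this, map_add, map_smul, smul_eq_mul]
    rfl
  have hsep : ∀ x t, f x < t → φ x + t * a < φ x₀ + f x₀ * a := fun x t h => by
    simpa only [hF_apply] using hF (x, t) ⟨mem_univ x, h⟩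
  have ha : a < 0 := by
    have := hsep x₀ (f x₀ + 1) (lt_add_one _)
    linarith
  refine ⟨(-a)⁻¹ • φ, fun x => ?_⟩
  have hle : φ x - φ x₀ ≤ -a * (f x - f x₀) := by
    refine le_of_forall_pos_lt_add fun δ hδ => ?_
    have := hsep x (f x - δ / a) (by linarith [div_neg_of_pos_of_neg hδ ha])
    rw [sub_mul, div_mul_cancel₀ _ ha.ne] at this
    linarith
  have : (-a)⁻¹ * (φ x - φ x₀) ≤ f x - f x₀ := by
    rwa [inv_mul_le_iff₀ (neg_pos.2 ha)]
  simp only [FunLike.coe_smul, Pi.smul_apply, map_sub, smul_eq_mul]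
  linarith

/-- If the positively homogeneous extension of the values `c i` along the
rays spanned by `v i` is locally near the origin the restriction of a convex function
on `ℝ^n`, and there are strictly positive weights `ω i` with `∑ ω i • v i = 0` and
`∑ ω i * c i = 0`, then the values `c i` are induced by a globally linear functional. -/
theorem convex_with_zero_divisor_is_linear {n m : ℕ}
    (v : Fin m → (Fin n → ℝ)) (c : Fin m → ℝ)
    (hconv : ∃ ε > (0 : ℝ), ∃ g : (Fin n → ℝ) → ℝ, ConvexOn ℝ Set.univ g ∧
      ∀ i : Fin m, ∀ t ∈ Set.Icc (0 : ℝ) ε, g (t • v i) = t * c i)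
    (hbal : ∃ ω : Fin m → ℝ, (∀ i, 0 < ω i) ∧ (∑ i, ω i • v i = 0) ∧
      (∑ i, ω i * c i = 0)) :
    ∃ L : (Fin n → ℝ) →ₗ[ℝ] ℝ, ∀ i, L (v i) = c i := by
  obtain ⟨ε, hε, g, hg, hgv⟩ := hconv
  obtain ⟨ω, hω, hωv, hωc⟩ := hbal
  obtain ⟨L, hL⟩ := hg.exists_subgradient (by simpa using hg.continuousOn_interior) 0
  have hle : ∀ i, L (v i) ≤ c i := fun i => by
    have hg0 : g 0 = 0 := by simpa using hgv i 0 ⟨le_rfl, hε.le⟩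
    have := hL (ε • v i)
    rw [hgv i ε ⟨hε.le, le_rfl⟩, hg0, sub_zero, map_smul, smul_eq_mul, zero_add] at this
    exact le_of_mul_le_mul_left this hε
  have hsum : ∑ i, ω i * (c i - L (v i)) = 0 := by
    have hωL : ∑ i, ω i * L (v i) = L (∑ i, ω i • v i) := by
      simp only [map_sum, map_smul, smul_eq_mul]
    simp only [mul_sub, Finset.sum_sub_distrib, hωc, hωL, hωv, map_zero, sub_zero]
  have hterms := (Finset.sum_eq_zero_iff_of_nonneg fun i _ =>
    mul_nonneg (hω i).le (sub_nonneg.2 (hle i))).1 hsum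
  refine ⟨L.toLinearMap, fun i => ?_⟩
  have := (mul_eq_zero.1 (hterms i (Finset.mem_univ i))).resolve_left (hω i).ne'
  exact (sub_eq_zero.1 this).symm
end

section
/- Let Λ, A, B be additive abelian groups, let h : Λ →+ A and H' : Λ →+ B be group homomorphisms, and define H : Λ →+ A × B by H(x) = (h(x), H'(x)). Then the index of the range of H in A × B equals the index of the range of H' in B multiplied by the index of the subgroup h(ker H') in A (with the convention that the index is 0 when infinite). -/
/-!
Let `R ≤ A × B` be the range of `H` and `K = A × 0`. Then
`[A × B : R] = [A × B : R + K] · [R + K : R]`. The projection to `B` identifies the first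
factor with `[B : range H']`, and `[R + K : R] = [K : R ∩ K]` with `R ∩ K = h(ker H') × 0`.
-/

theorem AddMonoidHom.range_inl_eq_ker_snd {A B : Type*} [AddGroup A] [AddGroup B] :
    (inl A B).range = (snd A B).ker := by
  ext ⟨a, b⟩
  simp [AddSubgroup.mem_prod, Prod.ext_iff, eq_comm]

theorem AddSubgroup.index_eq_index_map_snd_mul_index_comap_inl {A B : Type*}
    [AddCommGroup A] [AddCommGroup B] (R : AddSubgroup (A × B)) :
    R.index = (R.map (AddMonoidHom.snd A B)).index * (R.comap (AddMonoidHom.inl A B)).index := by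
  rw [index_map, (AddMonoidHom.snd A B).range_eq_top_of_surjective Prod.snd_surjective,
    index_top, mul_one, index_comap, AddMonoidHom.range_inl_eq_ker_snd,
    ← relIndex_sup_left, mul_comm, relIndex_mul_index le_sup_left]

theorem AddMonoidHom.comap_inl_range_prod {G A B : Type*} [AddGroup G] [AddGroup A] [AddGroup B]
    (f : G →+ A) (g : G →+ B) : (f.prod g).range.comap (inl A B) = g.ker.map f := by
  ext a
  simp [Prod.ext_iff, and_comm, eq_comm]

/-- For group homomorphisms `h : Λ →+ A`, `H' : Λ →+ B` and
`H = (h, H') : Λ →+ A × B`, the index of the range of `H` in `A × B` equals the index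
of the range of `H'` in `B` multiplied by the index of `h(ker H')` in `A`
(index `0` means infinite index). -/
theorem index_range_prod_eq {Λ A B : Type*}
    [AddCommGroup Λ] [AddCommGroup A] [AddCommGroup B]
    (h : Λ →+ A) (H' : Λ →+ B) (H : Λ →+ A × B)
    (hH : ∀ x : Λ, H x = (h x, H' x)) :
    H.range.index = H'.range.index * (H'.ker.map h).index := by
  obtain rfl : H = h.prod H' := AddMonoidHom.ext hH
  rw [AddSubgroup.index_eq_index_map_snd_mul_index_comap_inl, AddMonoidHom.map_range,
    AddMonoidHom.snd_comp_prod, AddMonoidHom.comap_inl_range_prod]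
end

section
/- Let f : ℝ^n → ℝ^r be a linear map, let τ ⊆ ℝ^n and γ ⊆ ℝ^r be nonempty polyhedra (finite intersections of closed affine halfspaces). Then there exists a dense open subset Ω ⊆ ℝ^r such that for every v ∈ Ω, the set τ ∩ f⁻¹(v + γ) is either empty or a polyhedron whose dimension equals dim τ + dim γ − r, where the dimension of a nonempty polyhedron is the dimension of the direction of its affine span. -/
/-- A polyhedron in a real vector space: a finite intersection of closed affine
halfspaces. -/
def IsPolyhedron {E : Type*} [AddCommGroup E] [Module ℝ E] (P : Set E) : Prop :=
  ∃ (m : ℕ) (L : Fin m → (E →ₗ[ℝ] ℝ)) (b : Fin m → ℝ), P = {x | ∀ i, L i x ≤ b i}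

/-- The dimension of a subset of a real vector space: the dimension of the direction
of its affine span. -/
noncomputable def polyDim {E : Type*} [AddCommGroup E] [Module ℝ E] (P : Set E) : ℕ :=
  Module.finrank ℝ (affineSpan ℝ P).direction

open Module Set

lemma poly_convex {E : Type*} [AddCommGroup E] [Module ℝ E] {P : Set E}
    {m : ℕ} (L : Fin m → (E →ₗ[ℝ] ℝ)) (b : Fin m → ℝ) (h : P = {x | ∀ i, L i x ≤ b i}) :
    Convex ℝ P := by
  subst h
  intro x hx y hy a c ha hc hac i
  simp only [map_add, map_smul, smul_eq_mul]
  calc a * L i x + c * L i y ≤ a * b i + c * b i := by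
        gcongr <;> [exact hx i; exact hy i]
    _ = b i := by rw [← add_mul, hac, one_mul]

/-- Relative-interior-like points: points of `P` with a whole relative ball inside `P`. -/
def RelPt {E : Type*} [NormedAddCommGroup E] [NormedSpace ℝ E] (P : Set E) : Set E :=
  {x | x ∈ P ∧ ∃ ε > 0, ∀ z ∈ (affineSpan ℝ P : Set E), dist z x < ε → z ∈ P}

lemma relPt_subset {E : Type*} [NormedAddCommGroup E] [NormedSpace ℝ E] {P : Set E} :
    RelPt P ⊆ P := fun _ h => h.1

lemma relPt_nonempty {E : Type*} [NormedAddCommGroup E] [NormedSpace ℝ E]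
    [FiniteDimensional ℝ E] {P : Set E} (hc : Convex ℝ P) (hne : P.Nonempty) :
    (RelPt P).Nonempty := by
  obtain ⟨x, hx⟩ := hne.intrinsicInterior hc
  rw [mem_intrinsicInterior] at hx
  obtain ⟨y, hy, rfl⟩ := hx
  have hyP : (y : E) ∈ P := by
    have := interior_subset hy
    simpa using this
  refine ⟨y, hyP, ?_⟩
  · rw [mem_interior_iff_mem_nhds, Metric.mem_nhds_iff] at hy
    obtain ⟨ε, hε, hball⟩ := hy
    refine ⟨ε, hε, fun z hz hdz => ?_⟩
    have : (⟨z, hz⟩ : affineSpan ℝ P) ∈ Metric.ball y ε := by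
      simpa [Metric.mem_ball, Subtype.dist_eq] using hdz
    exact hball this

lemma relPt_segment {E : Type*} [NormedAddCommGroup E] [NormedSpace ℝ E] {P : Set E}
    (hc : Convex ℝ P) {x p : E} (hx : x ∈ RelPt P) (hp : p ∈ P) {t : ℝ}
    (ht : 0 < t) (ht1 : t ≤ 1) : t • x + (1 - t) • p ∈ RelPt P := by
  obtain ⟨hxP, ε, hε, hball⟩ := hx
  set xt := t • x + (1 - t) • p with hxt
  have hxtP : xt ∈ P := hc hxP hp ht.le (by linarith) (by ring)
  refine ⟨hxtP, t * ε, by positivity, fun z hz hdz => ?_⟩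
  have hxmem : x ∈ affineSpan ℝ P := subset_affineSpan ℝ P hxP
  have hpmem : p ∈ affineSpan ℝ P := subset_affineSpan ℝ P hp
  have hxtmem : xt ∈ affineSpan ℝ P := by
    have h2 : xt = t • (x -ᵥ p) +ᵥ p := by
      rw [hxt]; simp only [vsub_eq_sub, vadd_eq_add]; module
    rw [h2]
    exact AffineSubspace.smul_vsub_vadd_mem (affineSpan ℝ P) t hxmem hpmem hpmem
  set z' := x + t⁻¹ • (z - xt) with hz'
  have hz'mem : z' ∈ affineSpan ℝ P := by
    have hd : z - xt ∈ (affineSpan ℝ P).direction :=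
      AffineSubspace.vsub_mem_direction hz hxtmem
    have : t⁻¹ • (z - xt) ∈ (affineSpan ℝ P).direction := Submodule.smul_mem _ _ hd
    simpa [hz', add_comm] using AffineSubspace.vadd_mem_of_mem_direction this hxmem
  have hz'P : z' ∈ P := by
    apply hball z' hz'mem
    have : dist z' x = t⁻¹ * dist z xt := by
      rw [hz', dist_eq_norm, add_sub_cancel_left, norm_smul, Real.norm_eq_abs,
        abs_of_pos (inv_pos.2 ht), dist_eq_norm]
    rw [this]
    calc t⁻¹ * dist z xt < t⁻¹ * (t * ε) := by
          apply mul_lt_mul_of_pos_left hdz (inv_pos.2 ht)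
      _ = ε := by field_simp
  have hz2 : t • z' = t • x + (z - xt) := by
    rw [hz', smul_add, smul_smul, mul_inv_cancel₀ ht.ne', one_smul]
  have : z = t • z' + (1 - t) • p := by
    rw [hz2, hxt]; module
  rw [this]
  exact hc hz'P hp ht.le (by linarith) (by ring)

lemma relPt_dense {E : Type*} [NormedAddCommGroup E] [NormedSpace ℝ E]
    [FiniteDimensional ℝ E] {P : Set E} (hc : Convex ℝ P) (hne : P.Nonempty)
    {p : E} (hp : p ∈ P) {δ : ℝ} (hδ : 0 < δ) : ∃ x ∈ RelPt P, dist x p < δ := by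
  obtain ⟨x₀, hx₀⟩ := relPt_nonempty hc hne
  set t : ℝ := min 1 (δ / (dist x₀ p + 1)) with htdef
  have hd1 : (0:ℝ) < dist x₀ p + 1 := by positivity
  have ht : 0 < t := lt_min one_pos (by positivity)
  have ht1 : t ≤ 1 := min_le_left _ _
  refine ⟨t • x₀ + (1 - t) • p, relPt_segment hc hx₀ hp ht ht1, ?_⟩
  have : dist (t • x₀ + (1 - t) • p) p = t * dist x₀ p := by
    have : t • x₀ + (1 - t) • p - p = t • (x₀ - p) := by module
    simp [dist_eq_norm, this, norm_smul, abs_of_pos ht]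
  rw [this]
  calc t * dist x₀ p ≤ (δ / (dist x₀ p + 1)) * dist x₀ p := by
        apply mul_le_mul_of_nonneg_right (min_le_right _ _) dist_nonneg
    _ < δ := by
        rw [div_mul_eq_mul_div, div_lt_iff₀ hd1]
        nlinarith [dist_nonneg (x := x₀) (y := p)]

lemma relPt_open_dir {E : Type*} [NormedAddCommGroup E] [NormedSpace ℝ E] {P : Set E}
    {x : E} (hx : x ∈ RelPt P) :
    ∃ ε > 0, ∀ w ∈ (affineSpan ℝ P).direction, ‖w‖ < ε → x + w ∈ RelPt P := by
  obtain ⟨hxP, ε, hε, hball⟩ := hx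
  refine ⟨ε, hε, fun w hw hwn => ?_⟩
  have hxmem : x ∈ affineSpan ℝ P := subset_affineSpan ℝ P hxP
  have hxw : x + w ∈ affineSpan ℝ P := by
    simpa [add_comm] using AffineSubspace.vadd_mem_of_mem_direction hw hxmem
  have hxwP : x + w ∈ P := hball _ hxw (by simpa [dist_eq_norm] using hwn)
  refine ⟨hxwP, ε - ‖w‖, by linarith, fun z hz hdz => ?_⟩
  apply hball z hz
  calc dist z x ≤ dist z (x + w) + dist (x + w) x := dist_triangle _ _ _
    _ < (ε - ‖w‖) + ‖w‖ := by
        apply add_lt_add_of_lt_of_le hdz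
        simp [dist_eq_norm]
    _ = ε := by ring

lemma finrank_inf_comap {n r : ℕ} (f : (Fin n → ℝ) →ₗ[ℝ] (Fin r → ℝ))
    (V : Submodule ℝ (Fin n → ℝ)) (W : Submodule ℝ (Fin r → ℝ))
    (h : V.map f ⊔ W = ⊤) :
    (finrank ℝ ↥(V ⊓ W.comap f) : ℤ) = finrank ℝ V + finrank ℝ W - r := by
  set π : V →ₗ[ℝ] (Fin r → ℝ) ⧸ W := W.mkQ ∘ₗ f ∘ₗ V.subtype with hπ
  have hker : LinearMap.ker π = (V ⊓ W.comap f).comap V.subtype := by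
    ext x
    simp [hπ, LinearMap.mem_ker, Submodule.Quotient.mk_eq_zero, x.2]
  have hrange : LinearMap.range π = ⊤ := by
    rw [LinearMap.range_eq_top]
    intro q
    obtain ⟨y, rfl⟩ := Submodule.Quotient.mk_surjective W q
    have hy : y ∈ Submodule.map f V ⊔ W := h.symm ▸ Submodule.mem_top
    obtain ⟨a, ha, b, hb, hab⟩ := Submodule.mem_sup.1 hy
    obtain ⟨va, hva, rfl⟩ := ha
    refine ⟨⟨va, hva⟩, ?_⟩
    have : π ⟨va, hva⟩ = Submodule.Quotient.mk (f va) := rfl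
    rw [this, Submodule.Quotient.eq]
    have : f va - y = -b := by rw [← hab]; abel
    rw [this]
    exact W.neg_mem hb
  have hrn := LinearMap.finrank_range_add_finrank_ker π
  rw [hrange, hker] at hrn
  have h1 : finrank ℝ (⊤ : Submodule ℝ ((Fin r → ℝ) ⧸ W)) = finrank ℝ ((Fin r → ℝ) ⧸ W) :=
    finrank_top _ _
  have h2 : finrank ℝ ((Fin r → ℝ) ⧸ W) + finrank ℝ W = finrank ℝ (Fin r → ℝ) :=
    Submodule.finrank_quotient_add_finrank W
  have h3 : finrank ℝ (Fin r → ℝ) = r := by simp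
  have h4 : finrank ℝ (Submodule.comap V.subtype (V ⊓ Submodule.comap f W))
      = finrank ℝ ↥(V ⊓ Submodule.comap f W) :=
    (Submodule.comapSubtypeEquivOfLe inf_le_left).finrank_eq
  rw [h1, h4] at hrn
  omega

lemma coset_compl_open_dense {r : ℕ} (U : Submodule ℝ (Fin r → ℝ)) (hU : U ≠ ⊤)
    (c : Fin r → ℝ) :
    IsOpen {v : Fin r → ℝ | v - c ∉ U} ∧ Dense {v : Fin r → ℝ | v - c ∉ U} := by
  constructor
  · have hcl : IsClosed (U : Set (Fin r → ℝ)) := Submodule.closed_of_finiteDimensional U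
    have : {v : Fin r → ℝ | v - c ∉ U} = (fun v => v - c) ⁻¹' (↑U)ᶜ := rfl
    rw [this]
    exact (hcl.isOpen_compl).preimage (continuous_id.sub continuous_const)
  · rw [Metric.dense_iff]
    intro z ρ hρ
    by_cases hz : z - c ∈ U
    · obtain ⟨w₀, hw₀⟩ : ∃ w₀, w₀ ∉ U := by
        by_contra hcon
        push_neg at hcon
        exact hU (Submodule.eq_top_iff'.2 hcon)
      set δ : ℝ := ρ / (2 * (‖w₀‖ + 1)) with hδdef
      have hn : (0:ℝ) < ‖w₀‖ + 1 := by positivity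
      have hδ : 0 < δ := by positivity
      refine ⟨z + δ • w₀, ?_, ?_⟩
      · rw [Metric.mem_ball, dist_eq_norm, add_sub_cancel_left, norm_smul,
          Real.norm_eq_abs, abs_of_pos hδ, hδdef]
        rw [div_mul_eq_mul_div, div_lt_iff₀ (by positivity)]
        nlinarith [norm_nonneg w₀]
      · intro hmem
        have : (z + δ • w₀ - c) - (z - c) ∈ U := U.sub_mem hmem hz
        have h5 : δ • w₀ ∈ U := by
          simpa [add_sub_cancel_left, sub_sub_sub_cancel_right] using this
        have := U.smul_mem δ⁻¹ h5
        rw [smul_smul, inv_mul_cancel₀ hδ.ne', one_smul] at this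
        exact hw₀ this
    · exact ⟨z, Metric.mem_ball_self hρ, hz⟩

lemma image_vadd_eq {r : ℕ} (v : Fin r → ℝ) (γ : Set (Fin r → ℝ)) :
    (fun x => v + x) '' γ = {y | y - v ∈ γ} := by
  ext y
  constructor
  · rintro ⟨c, hc, rfl⟩; simpa using hc
  · intro hy; exact ⟨y - v, hy, by module⟩

lemma inter_preimage_polyhedron {n r : ℕ} (f : (Fin n → ℝ) →ₗ[ℝ] (Fin r → ℝ))
    {τ : Set (Fin n → ℝ)} {γ : Set (Fin r → ℝ)}
    (hτ : IsPolyhedron τ) (hγ : IsPolyhedron γ) (v : Fin r → ℝ) :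
    IsPolyhedron (τ ∩ f ⁻¹' ((fun x => v + x) '' γ)) := by
  obtain ⟨m₁, L₁, b₁, rfl⟩ := hτ
  obtain ⟨m₂, L₂, b₂, hγeq⟩ := hγ
  refine ⟨m₁ + m₂, Fin.addCases L₁ (fun j => (L₂ j).comp f),
    Fin.addCases b₁ (fun j => b₂ j + L₂ j v), ?_⟩
  ext x
  simp only [Set.mem_inter_iff, Set.mem_preimage, image_vadd_eq, Set.mem_setOf_eq, hγeq]
  constructor
  · rintro ⟨h1, h2⟩ i
    refine Fin.addCases ?_ ?_ i
    · intro i; simpa using h1 i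
    · intro j
      have := h2 j
      simp only [map_sub] at this
      simp only [Fin.addCases_right, LinearMap.comp_apply]
      linarith
  · intro h
    constructor
    · intro i; simpa using h (Fin.castAdd m₂ i)
    · intro j
      have := h (Fin.natAdd m₁ j)
      simp only [Fin.addCases_right, LinearMap.comp_apply] at this
      simp only [map_sub]
      linarith

set_option maxHeartbeats 1000000 in
/-- For a linear map `f : ℝ^n → ℝ^r` and nonempty polyhedra `τ ⊆ ℝ^n`,
`γ ⊆ ℝ^r`, there is a dense open set `Ω ⊆ ℝ^r` of translation vectors `v` such that
`τ ∩ f⁻¹(v + γ)` is either empty or a polyhedron of dimension `dim τ + dim γ − r`. -/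
theorem general_translation_dimension {n r : ℕ}
    (f : (Fin n → ℝ) →ₗ[ℝ] (Fin r → ℝ))
    (τ : Set (Fin n → ℝ)) (γ : Set (Fin r → ℝ))
    (hτ : IsPolyhedron τ) (hγ : IsPolyhedron γ)
    (hτne : τ.Nonempty) (hγne : γ.Nonempty) :
    ∃ Ω : Set (Fin r → ℝ), IsOpen Ω ∧ Dense Ω ∧ ∀ v ∈ Ω,
      (τ ∩ f ⁻¹' ((fun x => v + x) '' γ) = ∅) ∨
      (IsPolyhedron (τ ∩ f ⁻¹' ((fun x => v + x) '' γ)) ∧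
        (polyDim (τ ∩ f ⁻¹' ((fun x => v + x) '' γ)) : ℤ)
          = (polyDim τ : ℤ) + (polyDim γ : ℤ) - (r : ℤ)) := by
  classical
  have hcτ : Convex ℝ τ := by obtain ⟨m, L, b, h⟩ := hτ; exact poly_convex L b h
  have hcγ : Convex ℝ γ := by obtain ⟨m, L, b, h⟩ := hγ; exact poly_convex L b h
  set V := (affineSpan ℝ τ).direction with hV
  set W := (affineSpan ℝ γ).direction with hW
  have hfc : Continuous f := f.continuous_of_finiteDimensional
  by_cases hsur : V.map f ⊔ W = ⊤
  · -- surjective case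
    set S := {u : Fin r → ℝ | ∃ x ∈ τ, ∃ y ∈ γ, u = f x - y} with hS
    set S0 := {u : Fin r → ℝ | ∃ x ∈ RelPt τ, ∃ y ∈ RelPt γ, u = f x - y} with hS0
    -- right inverse of (p, q) ↦ f p - q
    set φ : (V × W) →ₗ[ℝ] (Fin r → ℝ) :=
      (f ∘ₗ V.subtype ∘ₗ LinearMap.fst ℝ V W) - (W.subtype ∘ₗ LinearMap.snd ℝ V W) with hφ
    have hφap : ∀ pq : V × W, φ pq = f (pq.1 : Fin n → ℝ) - (pq.2 : Fin r → ℝ) := by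
      intro pq; simp [hφ]
    have hφsur : LinearMap.range φ = ⊤ := by
      rw [LinearMap.range_eq_top]
      intro u
      have hu : u ∈ V.map f ⊔ W := hsur.symm ▸ Submodule.mem_top
      obtain ⟨a, ha, b, hb, hab⟩ := Submodule.mem_sup.1 hu
      obtain ⟨p, hp, rfl⟩ := ha
      refine ⟨(⟨p, hp⟩, ⟨-b, W.neg_mem hb⟩), ?_⟩
      rw [hφap]
      simp only
      rw [← hab]; abel
    obtain ⟨σ, hσ⟩ := φ.exists_rightInverse_of_surjective hφsur
    have hσc : Continuous σ := σ.continuous_of_finiteDimensional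
    have hS0open : IsOpen S0 := by
      rw [Metric.isOpen_iff]
      rintro s ⟨x, hx, y, hy, rfl⟩
      obtain ⟨ε₁, hε₁, hx'⟩ := relPt_open_dir hx
      obtain ⟨ε₂, hε₂, hy'⟩ := relPt_open_dir hy
      have hc1 : Continuous (fun u : Fin r → ℝ => ‖((σ u).1 : Fin n → ℝ)‖) :=
        (continuous_subtype_val.comp (continuous_fst.comp hσc)).norm
      have hc2 : Continuous (fun u : Fin r → ℝ => ‖((σ u).2 : Fin r → ℝ)‖) :=
        (continuous_subtype_val.comp (continuous_snd.comp hσc)).norm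
      have hO : IsOpen {u : Fin r → ℝ | ‖((σ u).1 : Fin n → ℝ)‖ < ε₁ ∧
          ‖((σ u).2 : Fin r → ℝ)‖ < ε₂} := by
        rw [Set.setOf_and]
        exact (isOpen_lt hc1 continuous_const).inter (isOpen_lt hc2 continuous_const)
      have h00 : (0 : Fin r → ℝ) ∈ {u : Fin r → ℝ | ‖((σ u).1 : Fin n → ℝ)‖ < ε₁ ∧
          ‖((σ u).2 : Fin r → ℝ)‖ < ε₂} := by
        simp [map_zero, hε₁, hε₂]
      obtain ⟨δ, hδ, hball⟩ := Metric.isOpen_iff.1 hO 0 h00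
      refine ⟨δ, hδ, fun u' hu' => ?_⟩
      set u := u' - (f x - y) with hu
      have humem : u ∈ Metric.ball (0 : Fin r → ℝ) δ := by
        rw [Metric.mem_ball, dist_zero_right, hu]
        rw [Metric.mem_ball, dist_eq_norm] at hu'
        exact hu'
      obtain ⟨h1, h2⟩ := hball humem
      have hφσ : φ (σ u) = u := by
        rw [← LinearMap.comp_apply, hσ]; rfl
      set p : Fin n → ℝ := ((σ u).1 : Fin n → ℝ) with hpdef
      set q : Fin r → ℝ := ((σ u).2 : Fin r → ℝ) with hqdef
      have hpV : p ∈ V := (σ u).1.2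
      have hqW : q ∈ W := (σ u).2.2
      have hpq : f p - q = u := by rw [hpdef, hqdef, ← hφap]; exact hφσ
      refine ⟨x + p, hx' _ hpV h1, y + q, hy' _ hqW h2, ?_⟩
      have h7 : u' = (f x - y) + u := by rw [hu]; abel
      rw [h7, ← hpq, map_add]
      abel
    have hSsub : S ⊆ closure S0 := by
      rintro s ⟨p, hp, q, hq, rfl⟩
      rw [Metric.mem_closure_iff]
      intro ρ hρ
      obtain ⟨δ₀, hδ₀, hfd⟩ := Metric.continuous_iff.1 hfc p (ρ/2) (by positivity)
      obtain ⟨x, hx, hxp⟩ := relPt_dense hcτ hτne hp (lt_min hδ₀ (by positivity : (0:ℝ) < ρ/2))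
      obtain ⟨y, hy, hyq⟩ := relPt_dense hcγ hγne hq (by positivity : (0:ℝ) < ρ/2)
      refine ⟨f x - y, ⟨x, hx, y, hy, rfl⟩, ?_⟩
      have h1 : dist (f x) (f p) < ρ/2 := hfd x (hxp.trans_le (min_le_left _ _))
      calc dist (f p - q) (f x - y) ≤ dist (f p) (f x) + dist q y := by
            simp only [dist_eq_norm]
            have : f p - q - (f x - y) = (f p - f x) + (y - q) := by abel
            rw [this]
            calc ‖(f p - f x) + (y - q)‖ ≤ ‖f p - f x‖ + ‖y - q‖ := norm_add_le _ _
              _ = ‖f p - f x‖ + ‖q - y‖ := by rw [norm_sub_rev y q]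
        _ < ρ/2 + ρ/2 := by
            apply add_lt_add
            · rw [dist_comm]; exact h1
            · rw [dist_comm]; exact hyq
        _ = ρ := by ring
    refine ⟨S0 ∪ (closure S)ᶜ, hS0open.union (isClosed_closure.isOpen_compl), ?_, ?_⟩
    · -- density
      rw [Metric.dense_iff]
      intro z ρ hρ
      by_cases hzS : ∃ w ∈ Metric.ball z ρ, w ∉ closure S
      · obtain ⟨w, hw1, hw2⟩ := hzS
        exact ⟨w, hw1, Or.inr hw2⟩
      · push_neg at hzS
        have hz : z ∈ closure S := hzS z (Metric.mem_ball_self hρ)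
        obtain ⟨s, hsS, hzs⟩ := Metric.mem_closure_iff.1 hz (ρ/2) (by positivity)
        have hs0 : s ∈ closure S0 := hSsub hsS
        obtain ⟨w, hwS0, hsw⟩ := Metric.mem_closure_iff.1 hs0 (ρ/2) (by positivity)
        refine ⟨w, ?_, Or.inl hwS0⟩
        rw [Metric.mem_ball]
        calc dist w z ≤ dist w s + dist s z := dist_triangle _ _ _
          _ < ρ/2 + ρ/2 := by
              apply add_lt_add
              · rw [dist_comm]; exact hsw
              · rw [dist_comm]; exact hzs
          _ = ρ := by ring
    · -- main property
      intro v hv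
      rcases hv with hv | hv
      · right
        refine ⟨inter_preimage_polyhedron f hτ hγ v, ?_⟩
        obtain ⟨x, hx, y, hy, hveq⟩ := hv
        have hxτ' : x ∈ τ := relPt_subset hx
        have hyγ' : y ∈ γ := relPt_subset hy
        have hfxv : f x - v = y := by rw [hveq]; abel
        set X := τ ∩ f ⁻¹' ((fun x => v + x) '' γ) with hXdef
        have hXeq : ∀ z, z ∈ X ↔ z ∈ τ ∧ f z - v ∈ γ := by
          intro z
          rw [hXdef, Set.mem_inter_iff, Set.mem_preimage, image_vadd_eq, Set.mem_setOf_eq]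
        set g : (Fin n → ℝ) →ᵃ[ℝ] (Fin r → ℝ) :=
          { toFun := fun z => f z - v
            linear := f
            map_vadd' := by intro p w; simp only [vadd_eq_add, map_add]; abel } with hgdef
        have hgap : ∀ z, g z = f z - v := fun z => rfl
        set M : AffineSubspace ℝ (Fin n → ℝ) :=
          affineSpan ℝ τ ⊓ (affineSpan ℝ γ).comap g with hMdef
        have hMmem : ∀ z, z ∈ M ↔ z ∈ affineSpan ℝ τ ∧ f z - v ∈ affineSpan ℝ γ := by
          intro z
          rw [hMdef, AffineSubspace.mem_inf_iff, AffineSubspace.mem_comap]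
          rfl
        have hxX : x ∈ X := (hXeq x).2 ⟨hxτ', hfxv ▸ hyγ'⟩
        have hxM : x ∈ M := (hMmem x).2 ⟨subset_affineSpan ℝ τ hxτ',
          hfxv ▸ subset_affineSpan ℝ γ hyγ'⟩
        have hXM : X ⊆ (M : Set (Fin n → ℝ)) := by
          intro z hz
          obtain ⟨h1, h2⟩ := (hXeq z).1 hz
          exact (hMmem z).2 ⟨subset_affineSpan ℝ τ h1, subset_affineSpan ℝ γ h2⟩
        obtain ⟨hxτ2, ε₁, hε₁, hballτ⟩ := hx
        obtain ⟨hyγ2, ε₂, hε₂, hballγ⟩ := hy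
        obtain ⟨δ₀, hδ₀, hfd⟩ := Metric.continuous_iff.1 hfc x ε₂ hε₂
        set δ := min ε₁ δ₀ with hδdef
        have hδ : 0 < δ := lt_min hε₁ hδ₀
        have hkey : ∀ z ∈ (M : Set (Fin n → ℝ)), dist z x < δ → z ∈ X := by
          intro z hzM hdz
          obtain ⟨hz1, hz2⟩ := (hMmem z).1 hzM
          refine (hXeq z).2 ⟨hballτ z hz1 (hdz.trans_le (min_le_left _ _)), ?_⟩
          apply hballγ _ hz2
          have : dist (f z - v) y = dist (f z) (f x) := by
            rw [← hfxv, dist_eq_norm, dist_eq_norm]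
            congr 1
            abel
          rw [this]
          exact hfd z (hdz.trans_le (min_le_right _ _))
        have hMdir : M.direction = V ⊓ W.comap f := by
          ext w
          rw [← AffineSubspace.vadd_mem_iff_mem_direction w hxM, Submodule.mem_inf,
            Submodule.mem_comap, hMmem, vadd_eq_add]
          constructor
          · rintro ⟨h1, h2⟩
            constructor
            · rw [hV]
              rw [← AffineSubspace.vadd_mem_iff_mem_direction w
                (subset_affineSpan ℝ τ hxτ'), vadd_eq_add]
              exact h1
            · rw [hW]
              rw [← AffineSubspace.vadd_mem_iff_mem_direction (f w)
                (hfxv ▸ subset_affineSpan ℝ γ hyγ'), vadd_eq_add]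
              have : f (w + x) - v = f w + (f x - v) := by rw [map_add]; abel
              rw [← this]
              exact h2
          · rintro ⟨h1, h2⟩
            constructor
            · rw [hV] at h1
              have := (AffineSubspace.vadd_mem_iff_mem_direction w
                (subset_affineSpan ℝ τ hxτ')).2 h1
              rwa [vadd_eq_add] at this
            · rw [hW] at h2
              have := (AffineSubspace.vadd_mem_iff_mem_direction (f w)
                (hfxv ▸ subset_affineSpan ℝ γ hyγ')).2 h2
              rw [vadd_eq_add] at this
              have heq2 : f (w + x) - v = f w + (f x - v) := by rw [map_add]; abel
              rwa [heq2]
        have hdirX : (affineSpan ℝ X).direction = M.direction := by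
          apply le_antisymm
          · exact AffineSubspace.direction_le (affineSpan_le.2 hXM)
          · intro w hw
            rcases eq_or_ne w 0 with rfl | hw0
            · exact Submodule.zero_mem _
            have hwn : (0:ℝ) < ‖w‖ := norm_pos_iff.2 hw0
            set c := δ / (2 * ‖w‖) with hcdef
            have hc : 0 < c := by positivity
            have hcwM : x + c • w ∈ M := by
              have : c • w ∈ M.direction := Submodule.smul_mem _ _ hw
              have := AffineSubspace.vadd_mem_of_mem_direction this hxM
              rwa [vadd_eq_add, add_comm] at this
            have hcwX : x + c • w ∈ X := by
              apply hkey _ hcwM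
              rw [dist_eq_norm, add_sub_cancel_left, norm_smul, Real.norm_eq_abs,
                abs_of_pos hc, hcdef]
              rw [div_mul_eq_mul_div, div_lt_iff₀ (by positivity : (0:ℝ) < 2 * ‖w‖)]
              nlinarith [hδ, hwn]
            have h6 : c • w ∈ (affineSpan ℝ X).direction := by
              rw [direction_affineSpan]
              have hv6 := vsub_mem_vectorSpan ℝ hcwX hxX
              have : (x + c • w) -ᵥ x = c • w := by
                rw [vsub_eq_sub]; abel
              rwa [this] at hv6
            have := Submodule.smul_mem (affineSpan ℝ X).direction c⁻¹ h6
            rwa [smul_smul, inv_mul_cancel₀ hc.ne', one_smul] at this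
        have hfin := finrank_inf_comap f V W hsur
        have hpd : polyDim X = finrank ℝ ↥(V ⊓ W.comap f) := by
          rw [polyDim, hdirX, hMdir]
        have hpdτ : polyDim τ = finrank ℝ V := rfl
        have hpdγ : polyDim γ = finrank ℝ W := rfl
        rw [hpd, hpdτ, hpdγ]
        exact hfin
      · -- v ∉ closure S : empty
        left
        rw [Set.eq_empty_iff_forall_notMem]
        rintro x ⟨hxτ, hxp⟩
        rw [Set.mem_preimage, image_vadd_eq, Set.mem_setOf_eq] at hxp
        exact hv (subset_closure ⟨x, hxτ, f x - v, hxp, by abel⟩)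
  · -- degenerate case
    obtain ⟨x₀, hx₀⟩ := hτne
    obtain ⟨y₀, hy₀⟩ := hγne
    obtain ⟨hopen, hdense⟩ := coset_compl_open_dense (V.map f ⊔ W) hsur (f x₀ - y₀)
    refine ⟨_, hopen, hdense, fun v hv => Or.inl ?_⟩
    rw [Set.eq_empty_iff_forall_notMem]
    rintro x ⟨hxτ, hxp⟩
    rw [Set.mem_preimage, image_vadd_eq, Set.mem_setOf_eq] at hxp
    apply hv
    have h1 : x - x₀ ∈ V := by
      rw [hV]
      exact AffineSubspace.vsub_mem_direction (subset_affineSpan ℝ τ hxτ)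
        (subset_affineSpan ℝ τ hx₀)
    have h2 : (f x - v) - y₀ ∈ W := by
      rw [hW]
      exact AffineSubspace.vsub_mem_direction (subset_affineSpan ℝ γ hxp)
        (subset_affineSpan ℝ γ hy₀)
    have heq : v - (f x₀ - y₀) = f (x - x₀) - ((f x - v) - y₀) := by
      rw [map_sub]; abel
    show v - (f x₀ - y₀) ∈ V.map f ⊔ W
    rw [heq]
    exact Submodule.sub_mem _ (Submodule.mem_sup_left ⟨x - x₀, h1, rfl⟩)
      (Submodule.mem_sup_right h2)
end
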